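/- arXiv:cond-mat/0407582 — 7 statements merged into one kernel-verified Lean document; each statement's English description precedes it below -/
import Mathlib

section
/- For every p ≥ 0 and δ > 0, with μ₀ = (π² − 16δ²p²)/(16δ²(1+2p)), the purely imaginary number λ = i·π/(2δ) is a root of the characteristic equation λ + 2√(p² + μ₀(1+2p))·e^{−λδ} = 0. -/
open Complex in
/-- For every `p ≥ 0` and `δ > 0`, with `μ₀ = (π² − 16δ²p²)/(16δ²(1+2p))`,
the purely imaginary number `λ = i·π/(2δ)` is a root of the characteristic
equation `λ + 2√(p² + μ₀(1+2p))·e^{−λδ} = 0`. -/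
theorem char_eq_imaginary_root (p δ : ℝ) (hp : 0 ≤ p) (hδ : 0 < δ) :
    Complex.I * (Real.pi / (2 * δ)) +
      (2 * Real.sqrt (p ^ 2 +
          (Real.pi ^ 2 - 16 * δ ^ 2 * p ^ 2) / (16 * δ ^ 2 * (1 + 2 * p)) * (1 + 2 * p)) : ℝ) *
        Complex.exp (-(Complex.I * (Real.pi / (2 * δ))) * δ) = 0 := by
  have hδ' : (δ : ℝ) ≠ 0 := ne_of_gt hδ
  have h2p : (1 + 2 * p : ℝ) ≠ 0 := by positivity
  have harg : p ^ 2 + (Real.pi ^ 2 - 16 * δ ^ 2 * p ^ 2) / (16 * δ ^ 2 * (1 + 2 * p)) * (1 + 2 * p)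
      = (Real.pi / (4 * δ)) ^ 2 := by
    field_simp
    ring
  have hsqrt : Real.sqrt (p ^ 2 +
      (Real.pi ^ 2 - 16 * δ ^ 2 * p ^ 2) / (16 * δ ^ 2 * (1 + 2 * p)) * (1 + 2 * p))
      = Real.pi / (4 * δ) := by
    rw [harg, Real.sqrt_sq (by positivity)]
  have hexp : Complex.exp (-(Complex.I * (Real.pi / (2 * δ))) * δ) = -Complex.I := by
    have : (-(Complex.I * (Real.pi / (2 * δ))) * δ : ℂ) = (-(Real.pi / 2) : ℝ) * Complex.I := by
      have : (δ : ℂ) ≠ 0 := by exact_mod_cast hδ'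
      push_cast
      field_simp
    rw [this, Complex.exp_mul_I]
    simp [Complex.cos_pi_div_two, Complex.sin_pi_div_two]
  rw [hsqrt, hexp]
  have : (δ : ℂ) ≠ 0 := by exact_mod_cast hδ'
  push_cast
  field_simp
  ring
end

section
/- Let a > 0, δ > 0, and ω > 0. Then λ = iω is a root of the characteristic equation λ + a·e^{−λδ} = 0 if and only if a = ω and sin(ωδ) = 1. -/
/-- Let `a > 0`, `δ > 0`, and `ω > 0`.  Then `λ = iω` is a root of the
characteristic equation `λ + a·e^{−λδ} = 0` if and only if `a = ω` and
`sin(ωδ) = 1`. -/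
theorem imaginary_char_root_iff (a δ ω : ℝ) (ha : 0 < a) (hδ : 0 < δ) (hω : 0 < ω) :
    Complex.I * (ω : ℂ) + (a : ℂ) * Complex.exp (-(Complex.I * (ω : ℂ)) * (δ : ℂ)) = 0 ↔
      a = ω ∧ Real.sin (ω * δ) = 1 := by
  have harg : -(Complex.I * (ω : ℂ)) * (δ : ℂ) = ((-(ω * δ) : ℝ) : ℂ) * Complex.I := by
    push_cast; ring
  rw [harg, Complex.exp_mul_I, Complex.ext_iff]
  simp [← Complex.ofReal_mul, Complex.cos_ofReal_re, Complex.cos_ofReal_im,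
    Complex.sin_ofReal_re, Complex.sin_ofReal_im, Real.cos_neg, Real.sin_neg]
  constructor
  · rintro ⟨hre, him⟩
    have hcos : Real.cos (ω * δ) = 0 := by
      rcases hre with h | h
      · exact absurd h ha.ne'
      · exact h
    have hsin : a * Real.sin (ω * δ) = ω := by
      linarith
    have hs1 : Real.sin (ω * δ) = 1 := by
      have h2 := Real.sin_sq_add_cos_sq (ω * δ)
      have hb := Real.neg_one_le_sin (ω * δ)
      have hb2 := Real.sin_le_one (ω * δ)
      have hspos : 0 < Real.sin (ω * δ) := by nlinarith
      nlinarith [mul_self_nonneg (Real.sin (ω * δ) - 1)]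
    exact ⟨by nlinarith, hs1⟩
  · rintro ⟨rfl, hsin⟩
    have hcos : Real.cos (a * δ) = 0 := by
      have := Real.sin_sq_add_cos_sq (a * δ)
      nlinarith
    refine ⟨Or.inr hcos, by simp [hcos, hsin]⟩
end

section
/- Let δ > 0 and a = π/(2δ). For ω ∈ ℝ, the purely imaginary number λ = iω is a root of λ + a·e^{−λδ} = 0 if and only if ω = π/(2δ) or ω = −π/(2δ); in particular, at the bifurcation value the only roots of the characteristic equation on the imaginary axis are ±i·π/(2δ). -/
/-!
Splitting `iω + a e^{-iωδ} = 0` into real and imaginary parts gives `a cos(ωδ) = 0` and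
`ω = a sin(ωδ)`. For `a ≠ 0` the first forces `sin(ωδ) = ±1`, so `ω = ±a`; conversely, since
`aδ = π/2`, both `ω = ±a` put `ωδ` at `±π/2`.
-/

open Complex in
theorem I_mul_add_mul_exp_eq_zero_iff (a δ ω : ℝ) :
    I * ω + a * exp (-(I * ω) * δ) = 0 ↔
      a * Real.cos (ω * δ) = 0 ∧ ω = a * Real.sin (ω * δ) := by
  have h : I * ω + a * exp (-(I * ω) * δ) =
      ⟨a * Real.cos (ω * δ), ω - a * Real.sin (ω * δ)⟩ := by
    rw [mk_eq_add_mul_I, show -(I * ω) * δ = ((-(ω * δ) : ℝ) : ℂ) * I by push_cast; ring,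
      exp_mul_I, ← ofReal_cos, ← ofReal_sin, Real.cos_neg, Real.sin_neg]
    push_cast
    ring
  rw [h, Complex.ext_iff, zero_re, zero_im, sub_eq_zero]

open Real in
theorem I_mul_add_mul_exp_eq_zero_iff_of_mul_eq_pi_div_two {a δ : ℝ} (had : a * δ = π / 2)
    (ω : ℝ) :
    Complex.I * ω + a * Complex.exp (-(Complex.I * ω) * δ) = 0 ↔ ω = a ∨ ω = -a := by
  have ha : a ≠ 0 := by
    rintro rfl
    linarith [pi_pos]
  rw [I_mul_add_mul_exp_eq_zero_iff, mul_eq_zero, or_iff_right ha]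
  constructor
  · rintro ⟨hcos, hω⟩
    rcases cos_eq_zero_iff_sin_eq.mp hcos with hsin | hsin
    · left
      rw [hω, hsin, mul_one]
    · right
      rw [hω, hsin, mul_neg_one]
  · rintro (rfl | rfl)
    · simp [had]
    · simp [neg_mul, had]

/-- Let `δ > 0` and `a = π/(2δ)`.  For `ω ∈ ℝ`, the purely imaginary number
`λ = iω` is a root of `λ + a·e^{−λδ} = 0` if and only if `ω = π/(2δ)` or
`ω = −π/(2δ)`: at the bifurcation value the only characteristic roots on the
imaginary axis are `±i·π/(2δ)`. -/
theorem imaginary_axis_roots_at_bifurcation (δ : ℝ) (hδ : 0 < δ) (ω : ℝ) :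
    Complex.I * (ω : ℂ) +
        ((Real.pi / (2 * δ) : ℝ) : ℂ) * Complex.exp (-(Complex.I * (ω : ℂ)) * (δ : ℂ)) = 0 ↔
      ω = Real.pi / (2 * δ) ∨ ω = -(Real.pi / (2 * δ)) := by
  refine I_mul_add_mul_exp_eq_zero_iff_of_mul_eq_pi_div_two ?_ ω
  field_simp [hδ.ne']
end

section
/- Let a > 0 and δ > 0 with aδ < π/2. Then every root λ ∈ ℂ of the characteristic equation λ + a·e^{−λδ} = 0 satisfies Re λ < 0. -/
/-- Let `a > 0` and `δ > 0` with `aδ < π/2`.  Then every root `λ ∈ ℂ` of the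
characteristic equation `λ + a·e^{−λδ} = 0` satisfies `Re λ < 0`. -/
theorem char_roots_stable_of_small_delay (a δ : ℝ) (ha : 0 < a) (hδ : 0 < δ)
    (h : a * δ < Real.pi / 2) :
    ∀ lam : ℂ, lam + (a : ℂ) * Complex.exp (-lam * (δ : ℂ)) = 0 → lam.re < 0 := by
  intro lam heq
  by_contra hx
  push_neg at hx
  set x := lam.re with hxdef
  set y := lam.im with hydef
  set E := Real.exp (-(x * δ)) with hEdef
  have hre : x + a * (E * Real.cos (y * δ)) = 0 := by
    have := congrArg Complex.re heq
    simpa [Complex.add_re, Complex.mul_re, Complex.mul_im, Complex.exp_re,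
      Complex.exp_im, ← hEdef] using this
  have him : y + -(a * (E * Real.sin (y * δ))) = 0 := by
    have := congrArg Complex.im heq
    simpa [Complex.add_im, Complex.mul_re, Complex.mul_im, Complex.exp_re,
      Complex.exp_im, ← hEdef] using this
  have hE1 : E ≤ 1 := by
    rw [hEdef]
    apply Real.exp_le_one_iff.mpr
    nlinarith
  have hEpos : 0 < E := Real.exp_pos _
  have hy : |y| ≤ a := by
    have hyeq : y = a * (E * Real.sin (y * δ)) := by linarith
    rw [hyeq, abs_mul, abs_mul, abs_of_pos ha, abs_of_pos hEpos]
    have h1 : E * |Real.sin (y * δ)| ≤ 1 :=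
      mul_le_one₀ hE1 (abs_nonneg _) (Real.abs_sin_le_one _)
    nlinarith
  have hyd : |y * δ| < Real.pi / 2 := by
    rw [abs_mul, abs_of_pos hδ]
    calc |y| * δ ≤ a * δ := by nlinarith
    _ < Real.pi / 2 := h
  have hcos : 0 < Real.cos (y * δ) :=
    Real.cos_pos_of_mem_Ioo ⟨neg_lt_of_abs_lt hyd, lt_of_abs_lt hyd⟩
  nlinarith [mul_pos (mul_pos ha hEpos) hcos]
end

section
/- Let a > 0 and δ > 0 with aδ > π/2. Then there exists a root λ ∈ ℂ of the characteristic equation λ + a·e^{−λδ} = 0 with Re λ > 0. -/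
/-- Let `a > 0` and `δ > 0` with `aδ > π/2`.  Then there exists a root
`λ ∈ ℂ` of the characteristic equation `λ + a·e^{−λδ} = 0` with `Re λ > 0`. -/
theorem char_root_unstable_of_large_delay (a δ : ℝ) (ha : 0 < a) (hδ : 0 < δ)
    (h : Real.pi / 2 < a * δ) :
    ∃ lam : ℂ, lam + (a : ℂ) * Complex.exp (-lam * (δ : ℂ)) = 0 ∧ 0 < lam.re := by
  have hpi := Real.pi_gt_three
  obtain ⟨c, hc⟩ : ∃ c, c = a * δ := ⟨_, rfl⟩
  have hcad : Real.pi / 2 < c := by rw [hc]; exact h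
  have hc0 : 0 < c := by linarith
  have hc1 : 1 < c := by linarith
  obtain ⟨e, he⟩ : ∃ e, e = 1 / c := ⟨_, rfl⟩
  have hcinv : 0 < e := by rw [he]; positivity
  have hcinv1 : e < 1 := by rw [he, div_lt_one hc0]; exact hc1
  have hce : c * e = 1 := by rw [he]; field_simp
  set f : ℝ → ℝ := fun y => Real.exp (-y * Real.cos y / Real.sin y) * y / Real.sin y with hf
  obtain ⟨b, hb⟩ : ∃ b, b = Real.pi - e := ⟨_, rfl⟩
  have hb2 : Real.pi / 2 ≤ b := by rw [hb]; linarith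
  have hbpi : b < Real.pi := by rw [hb]; linarith
  have hbpos : (0:ℝ) < b := by linarith
  -- continuity on [π/2, b]
  have hsinpos : ∀ y ∈ Set.Icc (Real.pi/2) b, 0 < Real.sin y := by
    intro y hy
    exact Real.sin_pos_of_pos_of_lt_pi (by linarith [hy.1]) (lt_of_le_of_lt hy.2 hbpi)
  have hcont : ContinuousOn f (Set.Icc (Real.pi/2) b) := by
    apply ContinuousOn.div
    · apply ContinuousOn.mul _ continuousOn_id
      apply Real.continuous_exp.comp_continuousOn
      apply ContinuousOn.div
      · exact ((continuous_neg.mul Real.continuous_cos).continuousOn)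
      · exact Real.continuous_sin.continuousOn
      · intro y hy; exact (hsinpos y hy).ne'
    · exact Real.continuous_sin.continuousOn
    · intro y hy; exact (hsinpos y hy).ne'
  -- endpoint values
  have hfa : f (Real.pi/2) = Real.pi/2 := by
    simp [hf, Real.cos_pi_div_two, Real.sin_pi_div_two]
  have hfb : c ≤ f b := by
    have hsinb : Real.sin b = Real.sin e := by rw [hb, Real.sin_pi_sub]
    have hs1 : 0 < Real.sin e := Real.sin_pos_of_pos_of_lt_pi hcinv (by linarith)
    have hsb : 0 < Real.sin b := by rw [hsinb]; exact hs1
    have hs2 : Real.sin e ≤ e := Real.sin_le hcinv.le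
    have hcosb : Real.cos b ≤ 0 := by
      rw [hb, Real.cos_pi_sub, neg_nonpos]
      exact Real.cos_nonneg_of_mem_Icc ⟨by linarith, by linarith⟩
    have hexp : (1:ℝ) ≤ Real.exp (-b * Real.cos b / Real.sin b) := by
      rw [← Real.exp_zero]
      apply Real.exp_le_exp.2
      apply div_nonneg _ hsb.le
      nlinarith
    have h1 : c ≤ b / Real.sin b := by
      rw [le_div_iff₀ hsb, hsinb]
      nlinarith [mul_le_mul_of_nonneg_left hs2 hc0.le]
    calc c ≤ b / Real.sin b := h1
      _ ≤ Real.exp (-b * Real.cos b / Real.sin b) * b / Real.sin b := by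
          rw [div_le_div_iff₀ hsb hsb]
          nlinarith [mul_pos hbpos hsb]
      _ = f b := rfl
  -- intermediate value theorem
  have hmem : c ∈ Set.Icc (f (Real.pi/2)) (f b) := ⟨by rw [hfa]; linarith, hfb⟩
  obtain ⟨y, hy, hfy⟩ := intermediate_value_Icc hb2 hcont hmem
  have hsy : 0 < Real.sin y := hsinpos y hy
  have hylt : Real.pi/2 < y := by
    rcases lt_or_eq_of_le hy.1 with h' | h'
    · exact h'
    · exfalso; rw [← h', hfa] at hfy; linarith
  have hypi : y < Real.pi := lt_of_le_of_lt hy.2 hbpi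
  have hcy : Real.cos y < 0 := Real.cos_neg_of_pi_div_two_lt_of_lt hylt (by linarith)
  obtain ⟨x, hx⟩ : ∃ x, x = -y * Real.cos y / Real.sin y := ⟨_, rfl⟩
  have hx0 : 0 < x := by
    rw [hx]; apply div_pos _ hsy; nlinarith
  have hE := Real.exp_pos x
  -- key identities
  have hfy' : Real.exp x * y = c * Real.sin y := by
    have h3 : Real.exp (-y * Real.cos y / Real.sin y) * y / Real.sin y = c := hfy
    rw [← hx] at h3
    field_simp at h3
    linarith
  have hxsin : x * Real.sin y = -y * Real.cos y := by
    rw [hx]; exact div_mul_cancel₀ _ hsy.ne'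
  have hx_eq : Real.exp x * x = -(c * Real.cos y) := by
    have h2 : Real.exp x * x * Real.sin y = -(c * Real.cos y) * Real.sin y := by
      linear_combination Real.exp x * hxsin - Real.cos y * hfy'
    exact mul_right_cancel₀ hsy.ne' h2
  -- real-part and imaginary-part equations
  have hre : x / δ + a * (Real.exp (-x) * Real.cos y) = 0 := by
    rw [Real.exp_neg]
    field_simp
    linear_combination hx_eq - Real.cos y * hc
  have him : y / δ + a * (Real.exp (-x) * (-Real.sin y)) = 0 := by
    rw [Real.exp_neg]
    field_simp
    linear_combination hfy' + Real.sin y * hc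
  -- the root
  refine ⟨⟨x/δ, y/δ⟩, ?_, by dsimp; positivity⟩
  have hδ' : δ ≠ 0 := hδ.ne'
  have hz : (-(⟨x/δ, y/δ⟩ : ℂ)) * (δ:ℂ) = ⟨-x, -y⟩ := by
    apply Complex.ext <;>
      simp [Complex.mul_re, Complex.mul_im] <;> field_simp
  rw [hz]
  apply Complex.ext
  · simp [Complex.exp_re, Real.cos_neg]
    linear_combination hre
  · simp [Complex.exp_im, Real.sin_neg]
    linear_combination him
end

section
/- Let p ≥ 0 and δ > 0 satisfy 4δp < π, let μ₀ = (π² − 16δ²p²)/(16δ²(1+2p)), and let 0 < μ < μ₀. Then every root λ ∈ ℂ of the characteristic equation λ + 2√(p² + μ(1+2p))·e^{−λδ} = 0 satisfies Re λ < 0; that is, the equilibrium V* of the spreading model is linearly stable for μ below the Hopf bifurcation value μ₀. -/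
/-!
If `λ + a e^{-λδ} = 0` with `Re λ ≥ 0`, then `|λ| = a e^{-δ Re λ} ≤ a`, so `|δ Im λ| ≤ aδ`. When
`aδ < π/2` this forces `cos (δ Im λ) > 0`, and then the real part `Re λ + a e^{-δ Re λ} cos (δ Im λ)`
of the equation is positive, a contradiction. For the spreading model `a = 2√(p² + μ(1+2p))`, and
`μ < μ₀` is exactly the condition `aδ < π/2`.
-/

open Complex

section DelayCharacteristicEquation

theorem re_add_mul_exp_eq (a δ : ℝ) (lam : ℂ) :
    (lam + a * exp (-lam * δ)).re =
      lam.re + a * (Real.exp (-(lam.re * δ)) * Real.cos (lam.im * δ)) := by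
  simp [exp_re, Real.cos_neg]

variable {a δ : ℝ} {lam : ℂ}

theorem norm_le_of_add_mul_exp_eq_zero (ha : 0 ≤ a) (hδ : 0 ≤ δ)
    (h : lam + a * exp (-lam * δ) = 0) (hre : 0 ≤ lam.re) : ‖lam‖ ≤ a := by
  have hexp : Real.exp (-(lam.re * δ)) ≤ 1 :=
    Real.exp_le_one_iff.mpr (neg_nonpos.mpr (mul_nonneg hre hδ))
  calc ‖lam‖ = ‖(a : ℂ) * exp (-lam * δ)‖ :=
        (congrArg norm (eq_neg_of_add_eq_zero_left h)).trans (norm_neg _)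
    _ = a * Real.exp (-(lam.re * δ)) := by
        rw [norm_mul, norm_exp, norm_real, Real.norm_of_nonneg ha]
        simp
    _ ≤ a := mul_le_of_le_one_right ha hexp

theorem re_neg_of_add_mul_exp_eq_zero (ha : 0 < a) (hδ : 0 ≤ δ) (haδ : a * δ < Real.pi / 2)
    (h : lam + a * exp (-lam * δ) = 0) : lam.re < 0 := by
  by_contra! hre
  have him : |lam.im * δ| < Real.pi / 2 := by
    rw [abs_mul, abs_of_nonneg hδ]
    calc |lam.im| * δ ≤ a * δ := by
          gcongr
          exact (abs_im_le_norm lam).trans (norm_le_of_add_mul_exp_eq_zero ha.le hδ h hre)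
      _ < Real.pi / 2 := haδ
  have hcos : 0 < Real.cos (lam.im * δ) :=
    Real.cos_pos_of_mem_Ioo (abs_lt.mp him)
  have hpos : 0 < lam.re + a * (Real.exp (-(lam.re * δ)) * Real.cos (lam.im * δ)) := by
    positivity
  rw [← re_add_mul_exp_eq, h, zero_re] at hpos
  exact lt_irrefl 0 hpos

end DelayCharacteristicEquation

theorem two_mul_sqrt_mul_lt_pi_div_two {p δ μ : ℝ} (hp : 0 ≤ p) (hδ : 0 < δ)
    (hμ0 : μ < (Real.pi ^ 2 - 16 * δ ^ 2 * p ^ 2) / (16 * δ ^ 2 * (1 + 2 * p))) :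
    2 * Real.sqrt (p ^ 2 + μ * (1 + 2 * p)) * δ < Real.pi / 2 := by
  have hden : 0 < 16 * δ ^ 2 * (1 + 2 * p) := by positivity
  have hs : p ^ 2 + μ * (1 + 2 * p) < (Real.pi / (4 * δ)) ^ 2 := by
    rw [lt_div_iff₀ hden] at hμ0
    rw [div_pow, lt_div_iff₀ (by positivity)]
    nlinarith
  have hsqrt := (Real.sqrt_lt' (by positivity)).mpr hs
  calc 2 * Real.sqrt (p ^ 2 + μ * (1 + 2 * p)) * δ
      < 2 * (Real.pi / (4 * δ)) * δ := by gcongr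
    _ = Real.pi / 2 := by field_simp; ring

theorem spreading_linearly_stable_below_mu0_general (p δ μ : ℝ) (hp : 0 ≤ p) (hδ : 0 < δ)
    (hμ : 0 < μ)
    (hμ0 : μ < (Real.pi ^ 2 - 16 * δ ^ 2 * p ^ 2) / (16 * δ ^ 2 * (1 + 2 * p))) :
    ∀ lam : ℂ,
      lam + ((2 * Real.sqrt (p ^ 2 + μ * (1 + 2 * p)) : ℝ) : ℂ) *
          Complex.exp (-lam * (δ : ℂ)) = 0 →
        lam.re < 0 := by
  have hs : 0 < p ^ 2 + μ * (1 + 2 * p) := by positivity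
  exact fun lam ↦ re_neg_of_add_mul_exp_eq_zero (by positivity) hδ.le
    (two_mul_sqrt_mul_lt_pi_div_two hp hδ hμ0)

/-- Let `p ≥ 0` and `δ > 0` satisfy `4δp < π`, let
`μ₀ = (π² − 16δ²p²)/(16δ²(1+2p))`, and let `0 < μ < μ₀`.  Then every root
`λ ∈ ℂ` of the characteristic equation `λ + 2√(p² + μ(1+2p))·e^{−λδ} = 0`
satisfies `Re λ < 0`: the equilibrium `V*` of the spreading model is linearly
stable for `μ` below the Hopf bifurcation value `μ₀`. -/
theorem spreading_linearly_stable_below_mu0 (p δ μ : ℝ) (hp : 0 ≤ p) (hδ : 0 < δ)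
    (hpδ : 4 * δ * p < Real.pi) (hμ : 0 < μ)
    (hμ0 : μ < (Real.pi ^ 2 - 16 * δ ^ 2 * p ^ 2) / (16 * δ ^ 2 * (1 + 2 * p))) :
    ∀ lam : ℂ,
      lam + ((2 * Real.sqrt (p ^ 2 + μ * (1 + 2 * p)) : ℝ) : ℂ) *
          Complex.exp (-lam * (δ : ℂ)) = 0 →
        lam.re < 0 :=
  spreading_linearly_stable_below_mu0_general p δ μ hp hδ hμ hμ0
end

section
/- Let p ≥ 0 and δ > 0 satisfy 4δp < π, and let μ₀ = (π² − 16δ²p²)/(16δ²(1+2p)). Suppose λ : ℝ → ℂ is a branch of characteristic roots, i.e. λ is differentiable at μ₀, λ(μ₀) = i·π/(2δ), and λ(μ) + 2√(p² + μ(1+2p))·e^{−λ(μ)δ} = 0 for all μ in some neighborhood of μ₀. Then λ'(μ₀) = (16δ(1+2p)/(π(4+π²)))·(π/2 + i); in particular Re λ'(μ₀) = 8(1+2p)δ/(4+π²) > 0 and Im λ'(μ₀) = 16δ(1+2p)/(π(4+π²)) > 0, so the transversality condition for a Hopf bifurcation at μ = μ₀ holds. -/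
/-!
Differentiating the characteristic equation `λ + a(μ) e^{-λδ} = 0` along the branch and using
the equation itself to eliminate `a e^{-λδ} = -λ` gives `λ' · a (1 + δλ) = a' λ`. At `μ₀` the
coefficient is `a = 2√(p² + μ₀(1+2p)) = π/(2δ)` with `a' = 4δ(1+2p)/π`, and `λ = iπ/(2δ)`, so
`λ' = (4δ(1+2p)/π) · i/(1 + iπ/2)`.
-/

open Filter Topology Complex

theorem HasDerivAt.mul_coeff_mul_one_add_eq_of_char_root {a lam : ℝ → ℂ} {a' L δ : ℂ} {x : ℝ}
    (ha : HasDerivAt a a' x) (hlam : HasDerivAt lam L x)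
    (hroot : ∀ᶠ y in 𝓝 x, lam y + a y * cexp (-lam y * δ) = 0) :
    L * (a x * (1 + δ * lam x)) = a' * lam x := by
  have hF := hlam.add (ha.mul (hlam.neg.mul_const δ).cexp)
  have hD := hF.unique ((hasDerivAt_const x (0 : ℂ)).congr_of_eventuallyEq hroot)
  have h0 : lam x + a x * cexp (-lam x * δ) = 0 := hroot.self_of_nhds
  linear_combination a x * hD + (L * a x * δ - a') * h0

theorem hasDerivAt_two_mul_sqrt_add_mul {c k x : ℝ} (h : c + x * k ≠ 0) :
    HasDerivAt (fun y : ℝ => 2 * √(c + y * k)) (k / √(c + x * k)) x := by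
  have hinner : HasDerivAt (fun y : ℝ => c + y * k) k x := by
    simpa using ((hasDerivAt_id x).mul_const k).const_add c
  exact ((hinner.sqrt h).const_mul 2).congr_deriv (by ring)

open Filter in
theorem char_root_branch_transversality_general (p δ : ℝ) (hp : 0 ≤ p) (hδ : 0 < δ)
    (lam : ℝ → ℂ)
    (hdiff : DifferentiableAt ℝ lam
      ((Real.pi ^ 2 - 16 * δ ^ 2 * p ^ 2) / (16 * δ ^ 2 * (1 + 2 * p))))
    (hval : lam ((Real.pi ^ 2 - 16 * δ ^ 2 * p ^ 2) / (16 * δ ^ 2 * (1 + 2 * p)))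
      = Complex.I * (Real.pi / (2 * δ)))
    (hroot : ∀ᶠ μ in nhds ((Real.pi ^ 2 - 16 * δ ^ 2 * p ^ 2) / (16 * δ ^ 2 * (1 + 2 * p))),
      lam μ + ((2 * Real.sqrt (p ^ 2 + μ * (1 + 2 * p)) : ℝ) : ℂ) *
          Complex.exp (-lam μ * (δ : ℂ)) = 0) :
    deriv lam ((Real.pi ^ 2 - 16 * δ ^ 2 * p ^ 2) / (16 * δ ^ 2 * (1 + 2 * p)))
        = ((16 * δ * (1 + 2 * p) / (Real.pi * (4 + Real.pi ^ 2)) : ℝ) : ℂ) *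
            ((Real.pi / 2 : ℝ) + Complex.I) ∧
    (deriv lam ((Real.pi ^ 2 - 16 * δ ^ 2 * p ^ 2) / (16 * δ ^ 2 * (1 + 2 * p)))).re
        = 8 * (1 + 2 * p) * δ / (4 + Real.pi ^ 2) ∧
    0 < (deriv lam ((Real.pi ^ 2 - 16 * δ ^ 2 * p ^ 2) / (16 * δ ^ 2 * (1 + 2 * p)))).re ∧
    (deriv lam ((Real.pi ^ 2 - 16 * δ ^ 2 * p ^ 2) / (16 * δ ^ 2 * (1 + 2 * p)))).im
        = 16 * δ * (1 + 2 * p) / (Real.pi * (4 + Real.pi ^ 2)) ∧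
    0 < (deriv lam ((Real.pi ^ 2 - 16 * δ ^ 2 * p ^ 2) / (16 * δ ^ 2 * (1 + 2 * p)))).im := by
  set μ₀ := (Real.pi ^ 2 - 16 * δ ^ 2 * p ^ 2) / (16 * δ ^ 2 * (1 + 2 * p)) with hμ₀
  have h2p : 0 < 1 + 2 * p := by linarith
  have hsq : p ^ 2 + μ₀ * (1 + 2 * p) = (Real.pi / (4 * δ)) ^ 2 := by
    rw [hμ₀]; field_simp; ring
  have hsqrt : √(p ^ 2 + μ₀ * (1 + 2 * p)) = Real.pi / (4 * δ) := by
    rw [hsq, Real.sqrt_sq (by positivity)]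
  have ha := (hasDerivAt_two_mul_sqrt_add_mul (x := μ₀) (by rw [hsq]; positivity)).ofReal_comp
  have key := ha.mul_coeff_mul_one_add_eq_of_char_root hdiff.hasDerivAt hroot
  simp only [hsqrt, hval] at key
  have hderiv : deriv lam μ₀ = ((16 * δ * (1 + 2 * p) / (Real.pi * (4 + Real.pi ^ 2)) : ℝ) : ℂ) *
      ((Real.pi / 2 : ℝ) + I) := by
    have hδ' : (δ : ℂ) ≠ 0 := by exact_mod_cast hδ.ne'
    have hne : (Real.pi : ℂ) * (2 + Real.pi * I) ≠ 0 :=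
      mul_ne_zero (ofReal_ne_zero.mpr Real.pi_ne_zero) fun h => by simpa using congrArg re h
    have h4 : (4 + (Real.pi : ℂ) ^ 2) ≠ 0 := by
      exact_mod_cast (by positivity : 0 < 4 + Real.pi ^ 2).ne'
    refine mul_right_cancel₀ hne ?_
    push_cast at key ⊢
    field_simp at key ⊢
    linear_combination (4 + (Real.pi : ℂ) ^ 2) * key - 32 * Real.pi * δ * (1 + 2 * p) * I_sq
  have hre : (deriv lam μ₀).re = 8 * (1 + 2 * p) * δ / (4 + Real.pi ^ 2) := by
    rw [hderiv, re_ofReal_mul]; simp only [add_re, ofReal_re, I_re, add_zero]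
    field_simp; norm_num
  have him : (deriv lam μ₀).im = 16 * δ * (1 + 2 * p) / (Real.pi * (4 + Real.pi ^ 2)) := by
    rw [hderiv, im_ofReal_mul]; simp
  exact ⟨hderiv, hre, hre ▸ by positivity, him, him ▸ by positivity⟩

open Filter in
/-- Let `p ≥ 0` and `δ > 0` satisfy `4δp < π`, and let
`μ₀ = (π² − 16δ²p²)/(16δ²(1+2p))`.  Suppose `λ : ℝ → ℂ` is a branch of
characteristic roots: `λ` is differentiable at `μ₀`, `λ(μ₀) = i·π/(2δ)`, and
`λ(μ) + 2√(p² + μ(1+2p))·e^{−λ(μ)δ} = 0` for all `μ` in a neighborhood of `μ₀`.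
Then `λ'(μ₀) = (16δ(1+2p)/(π(4+π²)))·(π/2 + i)`; in particular
`Re λ'(μ₀) = 8(1+2p)δ/(4+π²) > 0` and `Im λ'(μ₀) = 16δ(1+2p)/(π(4+π²)) > 0`,
so the transversality condition for a Hopf bifurcation at `μ = μ₀` holds. -/
theorem char_root_branch_transversality (p δ : ℝ) (hp : 0 ≤ p) (hδ : 0 < δ)
    (hpδ : 4 * δ * p < Real.pi)
    (lam : ℝ → ℂ)
    (hdiff : DifferentiableAt ℝ lam
      ((Real.pi ^ 2 - 16 * δ ^ 2 * p ^ 2) / (16 * δ ^ 2 * (1 + 2 * p))))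
    (hval : lam ((Real.pi ^ 2 - 16 * δ ^ 2 * p ^ 2) / (16 * δ ^ 2 * (1 + 2 * p)))
      = Complex.I * (Real.pi / (2 * δ)))
    (hroot : ∀ᶠ μ in nhds ((Real.pi ^ 2 - 16 * δ ^ 2 * p ^ 2) / (16 * δ ^ 2 * (1 + 2 * p))),
      lam μ + ((2 * Real.sqrt (p ^ 2 + μ * (1 + 2 * p)) : ℝ) : ℂ) *
          Complex.exp (-lam μ * (δ : ℂ)) = 0) :
    deriv lam ((Real.pi ^ 2 - 16 * δ ^ 2 * p ^ 2) / (16 * δ ^ 2 * (1 + 2 * p)))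
        = ((16 * δ * (1 + 2 * p) / (Real.pi * (4 + Real.pi ^ 2)) : ℝ) : ℂ) *
            ((Real.pi / 2 : ℝ) + Complex.I) ∧
    (deriv lam ((Real.pi ^ 2 - 16 * δ ^ 2 * p ^ 2) / (16 * δ ^ 2 * (1 + 2 * p)))).re
        = 8 * (1 + 2 * p) * δ / (4 + Real.pi ^ 2) ∧
    0 < (deriv lam ((Real.pi ^ 2 - 16 * δ ^ 2 * p ^ 2) / (16 * δ ^ 2 * (1 + 2 * p)))).re ∧
    (deriv lam ((Real.pi ^ 2 - 16 * δ ^ 2 * p ^ 2) / (16 * δ ^ 2 * (1 + 2 * p)))).im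
        = 16 * δ * (1 + 2 * p) / (Real.pi * (4 + Real.pi ^ 2)) ∧
    0 < (deriv lam ((Real.pi ^ 2 - 16 * δ ^ 2 * p ^ 2) / (16 * δ ^ 2 * (1 + 2 * p)))).im :=
  char_root_branch_transversality_general p δ hp hδ lam hdiff hval hroot
end
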